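/- Let a ∈ ℂ and let f : (0,1) → ℂ satisfy f(ρ) = f_{j,k} ρ^j (log ρ)^k for constants f_{j,k} ∈ ℂ and (j,k) ∈ ℂ × ℕ with j ≠ a. Then the function ρ ↦ ρ^a ∫_ρ^1 s^{-a-1} f(s) ds equals c ρ^a plus a finite linear combination of terms ρ^j (log ρ)^{k'} with k' ≤ k, for some constant c ∈ ℂ; in particular it is a polyhomogeneous function with index set contained in {(a,0)} ∪ {(j,k'): k' ≤ k}. -/

import Mathlib

open Set intervalIntegral


lemma cpow_hasDeriv (b : ℂ) {x : ℝ} (hx : 0 < x) (hb : b ≠ 0) :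
    HasDerivAt (fun s : ℝ => (s:ℂ) ^ b) (b * (x:ℂ) ^ (b - 1)) x := by
  have h := hasDerivAt_ofReal_cpow_const' (x := x) hx.ne' (r := b - 1)
    (by simpa [sub_eq_iff_eq_add] using hb)
  simp only [sub_add_cancel] at h
  have := h.const_mul b
  simpa [mul_div_cancel₀ _ hb, mul_comm] using this

lemma logpow_hasDeriv (m : ℕ) {x : ℝ} (hx : 0 < x) :
    HasDerivAt (fun s : ℝ => ((Real.log s : ℂ)) ^ m)
      ((m : ℂ) * (Real.log x : ℂ) ^ (m - 1) * (x:ℂ)⁻¹) x := by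
  have h : HasDerivAt (fun s : ℝ => (Real.log s) ^ m)
      ((m : ℝ) * (Real.log x) ^ (m - 1) * x⁻¹) x :=
    (Real.hasDerivAt_log hx.ne').pow m
  have h2 := h.ofReal_comp
  have : (fun s : ℝ => ((Real.log s ^ m : ℝ) : ℂ)) = fun s : ℝ => ((Real.log s : ℂ)) ^ m := by
    funext s; push_cast; ring
  rw [this] at h2
  convert h2 using 1
  push_cast; ring

lemma term_hasDeriv (b : ℂ) (hb : b ≠ 0) (m : ℕ) {x : ℝ} (hx : 0 < x) :
    HasDerivAt (fun s : ℝ => (s:ℂ) ^ b * (Real.log s : ℂ) ^ m)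
      (b * (x:ℂ) ^ (b - 1) * (Real.log x : ℂ) ^ m
        + (m : ℂ) * (x:ℂ) ^ (b - 1) * (Real.log x : ℂ) ^ (m - 1)) x := by
  have hx0 : (x:ℂ) ≠ 0 := Complex.ofReal_ne_zero.2 hx.ne'
  have h := (cpow_hasDeriv b hx hb).mul (logpow_hasDeriv m hx)
  have hxb : (x:ℂ) ^ (b - 1) = (x:ℂ) ^ b * (x:ℂ)⁻¹ := by
    rw [Complex.cpow_sub _ _ hx0, Complex.cpow_one, div_eq_mul_inv]
  convert h using 1
  · rfl
  · rfl
  rw [hxb]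
  ring

lemma antider (b : ℂ) (hb : b ≠ 0) (k : ℕ) :
    ∃ c : ℕ → ℂ, ∀ x : ℝ, 0 < x →
      HasDerivAt (fun s : ℝ => ∑ i ∈ Finset.range (k+1), c i * (s:ℂ) ^ b * (Real.log s : ℂ) ^ i)
        ((x:ℂ) ^ (b - 1) * (Real.log x : ℂ) ^ k) x := by
  induction k with
  | zero =>
    refine ⟨fun _ => b⁻¹, fun x hx => ?_⟩
    have h := (term_hasDeriv b hb 0 hx).const_mul b⁻¹
    simp only [Finset.sum_range_one]
    convert h using 1
    · rfl
    · funext s; simp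
    · push_cast; field_simp; ring
  | succ k ih =>
    obtain ⟨c, hc⟩ := ih
    refine ⟨fun i => if i ≤ k then -((k+1 : ℂ)/b) * c i else b⁻¹, fun x hx => ?_⟩
    have h1 := (term_hasDeriv b hb (k+1) hx).const_mul b⁻¹
    have h2 := (hc x hx).const_mul (-((k+1 : ℂ)/b))
    have h := h1.add h2
    convert h using 1
    · rfl
    · funext s
      simp only [Pi.add_apply]
      rw [Finset.sum_range_succ, Finset.mul_sum]
      beta_reduce
      rw [if_neg (by omega : ¬ k + 1 ≤ k)]
      have hAB : (∑ i ∈ Finset.range (k+1),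
            (if i ≤ k then -((k+1 : ℂ)/b) * c i else b⁻¹) * (s:ℂ) ^ b * (Real.log s : ℂ) ^ i)
          = ∑ i ∈ Finset.range (k+1),
            -((k+1 : ℂ)/b) * (c i * (s:ℂ) ^ b * (Real.log s : ℂ) ^ i) := by
        refine Finset.sum_congr rfl fun i hi => ?_
        rw [if_pos (Nat.lt_succ_iff.mp (Finset.mem_range.mp hi))]
        ring
      rw [hAB]
      ring
    · simp only [Nat.add_sub_cancel]
      push_cast
      field_simp
      ring

/-- Integrating a single polyhomogeneous term `f(ρ) = f_{j,k} ρ^j (log ρ)^k`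
with `j ≠ a` against `ρ^a ∫_ρ^1 s^{-a-1} · ds` yields `c ρ^a` plus a finite linear
combination of terms `ρ^j (log ρ)^{k'}` with `k' ≤ k`. -/
theorem stmt0 (a j : ℂ) (k : ℕ) (fjk : ℂ) (f : ℝ → ℂ)
    (hja : j ≠ a)
    (hf : ∀ ρ ∈ Set.Ioo (0:ℝ) 1, f ρ = fjk * (ρ:ℂ) ^ j * (Real.log ρ : ℂ) ^ k) :
    ∃ c : ℂ, ∃ coef : ℕ → ℂ, ∀ ρ ∈ Set.Ioo (0:ℝ) 1,
      (ρ:ℂ) ^ a * ∫ s in ρ..1, (s:ℂ) ^ (-a - 1) * f s =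
        c * (ρ:ℂ) ^ a +
          ∑ k' ∈ Finset.range (k + 1), coef k' * (ρ:ℂ) ^ j * (Real.log ρ : ℂ) ^ k' := by
  have hb : j - a ≠ 0 := sub_ne_zero.mpr hja
  obtain ⟨c, hc⟩ := antider (j - a) hb k
  refine ⟨fjk * c 0, fun i => -fjk * c i, fun ρ hρ => ?_⟩
  obtain ⟨hρ0, hρ1⟩ := hρ
  -- Step 1: rewrite the integrand a.e.
  have hne1 : ∀ᵐ x : ℝ, x ≠ 1 := by
    rw [MeasureTheory.ae_iff]
    simp only [ne_eq, not_not, Set.setOf_eq_eq_singleton]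
    exact Real.volume_singleton
  have hint : (∫ s in ρ..1, (s:ℂ) ^ (-a - 1) * f s)
      = ∫ s in ρ..1, fjk * ((s:ℂ) ^ (j - a - 1) * (Real.log s : ℂ) ^ k) := by
    apply intervalIntegral.integral_congr_ae
    filter_upwards [hne1] with x hx1 hx
    rw [Set.uIoc_of_le hρ1.le] at hx
    have hx0 : 0 < x := hρ0.trans hx.1
    have hx' : x ∈ Set.Ioo (0:ℝ) 1 := ⟨hx0, lt_of_le_of_ne hx.2 hx1⟩
    rw [hf x hx']
    have hxne : (x:ℂ) ≠ 0 := Complex.ofReal_ne_zero.2 hx0.ne'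
    have he : (x:ℂ) ^ (-a - 1) * (x:ℂ) ^ j = (x:ℂ) ^ (j - a - 1) := by
      rw [← Complex.cpow_add _ _ hxne]; congr 1; ring
    calc (x:ℂ) ^ (-a - 1) * (fjk * (x:ℂ) ^ j * (Real.log x : ℂ) ^ k)
        = fjk * ((x:ℂ) ^ (-a - 1) * (x:ℂ) ^ j) * (Real.log x : ℂ) ^ k := by ring
      _ = fjk * ((x:ℂ) ^ (j - a - 1) * (Real.log x : ℂ) ^ k) := by rw [he]; ring
  -- Step 2: FTC
  set F : ℝ → ℂ := fun s => ∑ i ∈ Finset.range (k+1),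
    c i * (s:ℂ) ^ (j - a) * (Real.log s : ℂ) ^ i with hF
  have hderiv : ∀ x ∈ Set.uIcc ρ 1,
      HasDerivAt F ((x:ℂ) ^ (j - a - 1) * (Real.log x : ℂ) ^ k) x := by
    intro x hx
    rw [Set.uIcc_of_le hρ1.le] at hx
    exact hc x (hρ0.trans_le hx.1)
  have hcont : ContinuousOn (fun x : ℝ => (x:ℂ) ^ (j - a - 1) * (Real.log x : ℂ) ^ k)
      (Set.uIcc ρ 1) := by
    intro x hx
    rw [Set.uIcc_of_le hρ1.le] at hx
    have hx0 : 0 < x := hρ0.trans_le hx.1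
    apply ContinuousAt.continuousWithinAt
    apply ContinuousAt.mul
    · exact (continuousAt_cpow_const (Or.inl (by simpa using hx0))).comp
        Complex.continuous_ofReal.continuousAt
    · exact ((Complex.continuous_ofReal.continuousAt.comp
        (Real.continuousAt_log hx0.ne')).pow k)
  have hFTC := intervalIntegral.integral_eq_sub_of_hasDerivAt hderiv
    (hcont.intervalIntegrable)
  have hF1 : F 1 = c 0 := by
    rw [hF]
    simp only [Complex.ofReal_one, Complex.one_cpow, Real.log_one, Complex.ofReal_zero]
    rw [Finset.sum_range_succ']
    simp
  have hρne : (ρ:ℂ) ≠ 0 := Complex.ofReal_ne_zero.2 hρ0.ne'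
  have hρab : (ρ:ℂ) ^ a * (ρ:ℂ) ^ (j - a) = (ρ:ℂ) ^ j := by
    rw [← Complex.cpow_add _ _ hρne]; congr 1; ring
  have hterm : ∀ i ∈ Finset.range (k+1),
      (ρ:ℂ) ^ a * (c i * (ρ:ℂ) ^ (j - a) * (Real.log ρ : ℂ) ^ i)
        = c i * (ρ:ℂ) ^ j * (Real.log ρ : ℂ) ^ i := by
    intro i _
    calc (ρ:ℂ) ^ a * (c i * (ρ:ℂ) ^ (j - a) * (Real.log ρ : ℂ) ^ i)
        = c i * ((ρ:ℂ) ^ a * (ρ:ℂ) ^ (j - a)) * (Real.log ρ : ℂ) ^ i := by ring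
      _ = c i * (ρ:ℂ) ^ j * (Real.log ρ : ℂ) ^ i := by rw [hρab]
  have hFρ : (ρ:ℂ) ^ a * F ρ
      = ∑ i ∈ Finset.range (k+1), c i * (ρ:ℂ) ^ j * (Real.log ρ : ℂ) ^ i := by
    simp only [hF, Finset.mul_sum]
    exact Finset.sum_congr rfl hterm
  rw [hint, intervalIntegral.integral_const_mul, hFTC, hF1]
  calc (ρ:ℂ) ^ a * (fjk * (c 0 - F ρ))
      = fjk * c 0 * (ρ:ℂ) ^ a + (-fjk) * ((ρ:ℂ) ^ a * F ρ) := by ring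
    _ = fjk * c 0 * (ρ:ℂ) ^ a +
          ∑ k' ∈ Finset.range (k + 1), -fjk * c k' * (ρ:ℂ) ^ j * (Real.log ρ : ℂ) ^ k' := by
        rw [hFρ, Finset.mul_sum]
        congr 1
        exact Finset.sum_congr rfl fun i _ => by ring
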